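/- Let F be a fusion system over a finite p-group S. The submodule A_F(S,S) of the double Burnside ring A(S,S), spanned by basis elements [P,φ] with P ≤ S and φ ∈ Hom_F(P,S), is closed under the composition product and contains the identity [S, id]; hence A_F(S,S) is a subring of A(S,S). -/

import Mathlib

/-- A `(G₁,G₂)`-pair: a subgroup `H ≤ G₁` with a homomorphism `ψ : H → G₂`. -/
structure GPair (G₁ G₂ : Type*) [Group G₁] [Group G₂] where
  H : Subgroup G₁
  ψ : ↥H →* G₂

variable {G₁ G₂ G₃ : Type*} [Group G₁] [Group G₂] [Group G₃]

/-- `(G₁,G₂)`-conjugacy of pairs. -/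
def gpairConj (a b : GPair G₁ G₂) : Prop :=
  ∃ (g : G₁) (h : G₂), a.H.map (MulAut.conj g).toMonoidHom = b.H ∧
    ∀ (x : G₁) (hx : x ∈ a.H) (hx' : g * x * g⁻¹ ∈ b.H),
      b.ψ ⟨g * x * g⁻¹, hx'⟩ = h * a.ψ ⟨x, hx⟩ * h⁻¹

/-- The Burnside module `A(G₁,G₂)` with coefficients in `R`: the free `R`-module on the
conjugacy classes of `(G₁,G₂)`-pairs, an element being recorded by its coordinates. -/
def BurnsideMod (R : Type*) (G₁ G₂ : Type*) [Group G₁] [Group G₂] : Type _ :=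
  Quot (gpairConj (G₁ := G₁) (G₂ := G₂)) → R

instance (R : Type*) [AddCommMonoid R] : AddCommMonoid (BurnsideMod R G₁ G₂) :=
  Pi.addCommMonoid

instance (R : Type*) [Semiring R] : Module R (BurnsideMod R G₁ G₂) :=
  Pi.module _ _ _

open Classical in
/-- The basis element of the Burnside module corresponding to a pair. -/
noncomputable def gdelta {R : Type*} [Zero R] [One R] (a : GPair G₁ G₂) :
    BurnsideMod R G₁ G₂ :=
  fun q => if q = Quot.mk _ a then 1 else 0

/-- The subgroup `ψ⁻¹(ψ(H) ∩ K^x) ≤ G₁` appearing in the double coset formula, for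
`a = (K,ρ)`, `b = (H,ψ)` and `x ∈ G₂`. -/
def dcfSub (a : GPair G₂ G₃) (b : GPair G₁ G₂) (x : G₂) : Subgroup G₁ :=
  Subgroup.map b.H.subtype
    (Subgroup.comap b.ψ (Subgroup.comap (MulAut.conj x).toMonoidHom a.H))

lemma dcfSub_le (a : GPair G₂ G₃) (b : GPair G₁ G₂) (x : G₂) : dcfSub a b x ≤ b.H :=
  Subgroup.map_subtype_le _

lemma dcf_mem (a : GPair G₂ G₃) (b : GPair G₁ G₂) (x : G₂) (u : ↥(dcfSub a b x)) :
    ((MulAut.conj x).toMonoidHom.comp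
        (b.ψ.comp (Subgroup.inclusion (dcfSub_le a b x)))) u ∈ a.H := by
  obtain ⟨w, hw, hwu⟩ := u.2
  have h1 : Subgroup.inclusion (dcfSub_le a b x) u = w := by
    apply Subtype.ext
    simpa using hwu.symm
  simp only [MonoidHom.comp_apply, h1]
  simpa [Subgroup.mem_comap] using hw

/-- The summand `[ψ⁻¹(ψ(H) ∩ K^x), ρ ∘ c_x ∘ ψ]` of the double coset formula. -/
def dcfPair (a : GPair G₂ G₃) (b : GPair G₁ G₂) (x : G₂) : GPair G₁ G₃ where
  H := dcfSub a b x
  ψ := a.ψ.comp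
    (MonoidHom.codRestrict
      ((MulAut.conj x).toMonoidHom.comp (b.ψ.comp (Subgroup.inclusion (dcfSub_le a b x))))
      a.H (dcf_mem a b x))

/-- `T` is a transversal of the double cosets `K\G₂/ψ(H)`, for `a = (K,ρ)`, `b = (H,ψ)`. -/
def IsTransversal (a : GPair G₂ G₃) (b : GPair G₁ G₂) (T : Finset G₂) : Prop :=
  ∀ y : G₂, ∃! x, x ∈ T ∧ ∃ k ∈ a.H, ∃ v ∈ b.ψ.range, y = k * x * v

/-- The bilinear pairing `c` is the composition pairing of Burnside modules: on basis
elements it is given by the double coset formula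
`[K,ρ] ∘ [H,ψ] = Σ_{x ∈ K\G₂/ψ(H)} [ψ⁻¹(ψ(H) ∩ K^x), ρ ∘ c_x ∘ ψ]`. -/
def DCFLaw {R : Type*} [CommSemiring R]
    (c : BurnsideMod R G₂ G₃ →ₗ[R] BurnsideMod R G₁ G₂ →ₗ[R] BurnsideMod R G₁ G₃) :
    Prop :=
  ∀ (a : GPair G₂ G₃) (b : GPair G₁ G₂) (T : Finset G₂), IsTransversal a b T →
    c (gdelta a) (gdelta b) = ∑ x ∈ T, gdelta (dcfPair a b x)

/-- A fusion system `F` over a finite `p`-group `S`.  A morphism `P → Q` is recorded as a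
homomorphism `↥P →* S` whose image is contained in `Q`. -/
structure FusionSystem (S : Type*) [Group S] where
  Hom : (P : Subgroup S) → Set (↥P →* S)
  inj : ∀ (P : Subgroup S) (φ : ↥P →* S), φ ∈ Hom P → Function.Injective φ
  conj_mem : ∀ (P : Subgroup S) (g : S), (MulAut.conj g).toMonoidHom.comp P.subtype ∈ Hom P
  comp_mem : ∀ (P Q : Subgroup S) (φ : ↥P →* S) (χ : ↥Q →* S), φ ∈ Hom P → χ ∈ Hom Q →
    ∀ h : ∀ x, φ x ∈ Q, χ.comp (φ.codRestrict Q h) ∈ Hom P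
  inv_mem : ∀ (P Q : Subgroup S) (e : ↥P ≃* ↥Q), Q.subtype.comp e.toMonoidHom ∈ Hom P →
    P.subtype.comp e.symm.toMonoidHom ∈ Hom Q

/-- An `(S,S)`-pair `(P,φ)` belongs to the fusion system `F` if `φ ∈ Hom_F(P,S)`. -/
def IsFPair {S : Type*} [Group S] (F : FusionSystem S) (a : GPair S S) : Prop :=
  a.ψ ∈ F.Hom a.H

/-- The submodule `A_F(S,S)` of the double Burnside ring spanned by the basis elements
`[P,φ]` with `φ ∈ Hom_F(P,S)`, described by a support condition on coordinates. -/
def AFmod {S : Type*} [Group S] (F : FusionSystem S) : Set (BurnsideMod ℤ S S) :=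
  {c | ∀ q, c q ≠ 0 → ∃ a : GPair S S, Quot.mk _ a = q ∧ IsFPair F a}

section Aux

variable {S : Type*} [Group S]

/-- `gdelta` only depends on the conjugacy class. -/
lemma gdelta_congr {a b : GPair G₁ G₂} (h : Quot.mk gpairConj a = Quot.mk gpairConj b) :
    (gdelta a : BurnsideMod ℤ G₁ G₂) = gdelta b := by
  funext q
  simp only [gdelta]
  rw [h]

/-- The double-coset setoid on `G₂` determined by a pair of pairs. -/
def dSetoid (a : GPair G₂ G₃) (b : GPair G₁ G₂) : Setoid G₂ where
  r y y' := ∃ k ∈ a.H, ∃ v ∈ b.ψ.range, y' = k * y * v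
  iseqv := by
    constructor
    · intro y; exact ⟨1, one_mem _, 1, one_mem _, by group⟩
    · rintro y y' ⟨k, hk, v, hv, rfl⟩
      exact ⟨k⁻¹, inv_mem hk, v⁻¹, inv_mem hv, by group⟩
    · rintro y y' y'' ⟨k, hk, v, hv, rfl⟩ ⟨k', hk', v', hv', rfl⟩
      exact ⟨k' * k, mul_mem hk' hk, v * v', mul_mem hv hv', by group⟩

lemma exists_transversal [Finite G₂] (a : GPair G₂ G₃) (b : GPair G₁ G₂) :
    ∃ T : Finset G₂, IsTransversal a b T := by
  classical
  letI s := dSetoid a b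
  haveI : Finite (Quotient s) :=
    Finite.of_surjective (Quotient.mk s) fun q => ⟨q.out, Quotient.out_eq q⟩
  haveI : Fintype (Quotient s) := Fintype.ofFinite (Quotient s)
  haveI : Fintype G₂ := Fintype.ofFinite _
  refine ⟨Finset.univ.image (fun q : Quotient s => q.out), ?_⟩
  intro y
  refine ⟨(Quotient.mk s y).out, ⟨Finset.mem_image.2 ⟨_, Finset.mem_univ _, rfl⟩, ?_⟩, ?_⟩
  · have : s.r (Quotient.mk s y).out y := by
      refine Quotient.exact (s := s) ?_
      rw [Quotient.out_eq]
    exact this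
  · rintro x' ⟨hx', k, hk, v, hv, rfl⟩
    obtain ⟨q, -, rfl⟩ := Finset.mem_image.1 hx'
    have : Quotient.mk s q.out = Quotient.mk s (k * q.out * v) :=
      Quotient.sound ⟨k, hk, v, hv, rfl⟩
    rw [Quotient.out_eq] at this
    rw [← this, Quotient.out_inj.mpr rfl]

/-- Each summand of the double coset formula stays in the fusion system. -/
lemma dcfPair_isF (F : FusionSystem S) {a b : GPair S S}
    (ha : IsFPair F a) (hb : IsFPair F b) (x : S) : IsFPair F (dcfPair a b x) := by
  set R := dcfSub a b x with hR
  have h1 := dcfSub_le a b x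
  -- the inclusion R ↪ S is an F-morphism
  have hA : R.subtype ∈ F.Hom R := by
    have := F.conj_mem R 1
    have he : (MulAut.conj (1 : S)).toMonoidHom.comp R.subtype = R.subtype := by
      ext u; simp
    rwa [he] at this
  -- restrict-corestrict to b.H and compose with b.ψ
  have hmem1 : ∀ u : ↥R, R.subtype u ∈ b.H := fun u => h1 u.2
  have hB : b.ψ.comp (R.subtype.codRestrict b.H hmem1) ∈ F.Hom R :=
    F.comp_mem R b.H R.subtype b.ψ hA hb hmem1
  set χ₁ := b.ψ.comp (R.subtype.codRestrict b.H hmem1) with hχ₁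
  -- compose with conjugation by x
  have hmem2 : ∀ u : ↥R, χ₁ u ∈ (⊤ : Subgroup S) := fun _ => trivial
  have hC : ((MulAut.conj x).toMonoidHom.comp (⊤ : Subgroup S).subtype).comp
      (χ₁.codRestrict ⊤ hmem2) ∈ F.Hom R :=
    F.comp_mem R ⊤ χ₁ _ hB (F.conj_mem ⊤ x) hmem2
  set χ₂ := ((MulAut.conj x).toMonoidHom.comp (⊤ : Subgroup S).subtype).comp
      (χ₁.codRestrict ⊤ hmem2) with hχ₂
  -- its image lies in a.H
  have hmem3 : ∀ u : ↥R, χ₂ u ∈ a.H := by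
    intro u
    have := dcf_mem a b x u
    have he : χ₂ u = ((MulAut.conj x).toMonoidHom.comp
        (b.ψ.comp (Subgroup.inclusion (dcfSub_le a b x)))) u := by
      simp only [hχ₂, hχ₁, MonoidHom.comp_apply, MonoidHom.codRestrict_apply,
        Subgroup.coe_subtype]
      congr 1
    rwa [he]
  have hD : a.ψ.comp (χ₂.codRestrict a.H hmem3) ∈ F.Hom R :=
    F.comp_mem R a.H χ₂ a.ψ hC ha hmem3
  have hE : a.ψ.comp (χ₂.codRestrict a.H hmem3) = (dcfPair a b x).ψ := by
    ext u
    show a.ψ _ = a.ψ _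
    congr 1
  rw [IsFPair, ← hE]
  exact hD

lemma gdelta_mem_AFmod (F : FusionSystem S) {a : GPair S S} (ha : IsFPair F a) :
    (gdelta a : BurnsideMod ℤ S S) ∈ AFmod F := by
  intro q hq
  refine ⟨a, ?_, ha⟩
  by_contra h
  apply hq
  simp only [gdelta]
  rw [if_neg fun h' => h h'.symm]

lemma zero_mem_AFmod (F : FusionSystem S) : (0 : BurnsideMod ℤ S S) ∈ AFmod F :=
  fun _ hq => absurd rfl hq

lemma sum_mem_AFmod (F : FusionSystem S) {ι : Type*} (T : Finset ι)
    (f : ι → BurnsideMod ℤ S S) (h : ∀ i ∈ T, f i ∈ AFmod F) :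
    (∑ i ∈ T, f i) ∈ AFmod F := by
  intro q hq
  rw [show (∑ i ∈ T, f i) q = ∑ i ∈ T, f i q from Finset.sum_apply (M := fun _ => ℤ) q T f] at hq
  obtain ⟨i, hi, hne⟩ := Finset.exists_ne_zero_of_sum_ne_zero hq
  exact h i hi q hne

lemma smul_mem_AFmod (F : FusionSystem S) (c : ℤ) {f : BurnsideMod ℤ S S}
    (h : f ∈ AFmod F) : c • f ∈ AFmod F := by
  intro q hq
  refine h q fun h0 => hq ?_
  show c * f q = 0
  rw [h0, mul_zero]

end Aux

/-- `A_F(S,S)` is a subring of the double Burnside ring `A(S,S)`: it contains the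
identity `[S, id]` and is closed under the composition product (here `comp` is any
bilinear pairing satisfying the double coset formula, i.e. the product of `A(S,S)`). -/
theorem stmt15 (p : ℕ) (hp : p.Prime) {S : Type*} [Group S] [Fintype S]
    (hS : IsPGroup p S) (F : FusionSystem S)
    (comp : BurnsideMod ℤ S S →ₗ[ℤ] BurnsideMod ℤ S S →ₗ[ℤ] BurnsideMod ℤ S S)
    (hdcf : DCFLaw comp) :
    gdelta ⟨⊤, (⊤ : Subgroup S).subtype⟩ ∈ AFmod F ∧
      ∀ Ω Λ : BurnsideMod ℤ S S, Ω ∈ AFmod F → Λ ∈ AFmod F → comp Ω Λ ∈ AFmod F := by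
  classical
  haveI : Finite (GPair S S) := by
    have hinj : Function.Injective
        (fun a : GPair S S => (⟨a.H, a.ψ⟩ : Σ H : Subgroup S, ↥H →* S)) := by
      rintro ⟨H, ψ⟩ ⟨H', ψ'⟩ h
      obtain ⟨rfl, h2⟩ := Sigma.mk.inj_iff.mp h
      simpa using heq_iff_eq.mp h2
    haveI : ∀ H : Subgroup S, Finite (↥H →* S) := fun H =>
      Finite.of_injective (fun f : ↥H →* S => (f : ↥H → S)) DFunLike.coe_injective
    exact Finite.of_injective _ hinj
  haveI : Finite (Quot (gpairConj (G₁ := S) (G₂ := S))) :=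
    Finite.of_surjective (Quot.mk _) Quot.mk_surjective
  haveI : Fintype (Quot (gpairConj (G₁ := S) (G₂ := S))) := Fintype.ofFinite _
  -- decomposition of an arbitrary element into basis elements
  have hdecomp : ∀ f : BurnsideMod ℤ S S,
      f = ∑ q : Quot (gpairConj (G₁ := S) (G₂ := S)), f q • gdelta (Quot.out q) := by
    intro f
    funext q'
    rw [show (∑ q, f q • gdelta (Quot.out q) : BurnsideMod ℤ S S) q' = ∑ q, (f q • (gdelta (Quot.out q) : BurnsideMod ℤ S S)) q' from Finset.sum_apply (M := fun _ => ℤ) q' _ _]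
    have : ∀ q : Quot (gpairConj (G₁ := S) (G₂ := S)),
        (f q • (gdelta (Quot.out q) : BurnsideMod ℤ S S)) q' =
          if q' = q then f q else 0 := by
      intro q
      show f q * (if q' = Quot.mk _ (Quot.out q) then 1 else 0) = _
      rw [Quot.out_eq]
      split <;> simp
    simp only [this, Finset.sum_ite_eq, Finset.mem_univ, if_pos]
    exact ((Finset.sum_ite_eq Finset.univ q' (fun x => f x)).trans (if_pos (Finset.mem_univ _))).symm
  -- members of the F-module: comp of two F basis elements stays in the F-module
  have hcompF : ∀ a b : GPair S S, IsFPair F a → IsFPair F b →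
      comp (gdelta a) (gdelta b) ∈ AFmod F := by
    intro a b ha hb
    obtain ⟨T, hT⟩ := exists_transversal a b
    rw [hdcf a b T hT]
    exact sum_mem_AFmod F T _ fun x _ => gdelta_mem_AFmod F (dcfPair_isF F ha hb x)
  constructor
  · refine gdelta_mem_AFmod F ?_
    have := F.conj_mem ⊤ 1
    have he : (MulAut.conj (1 : S)).toMonoidHom.comp (⊤ : Subgroup S).subtype =
        (⊤ : Subgroup S).subtype := by ext u; simp
    rwa [he] at this
  · intro Ω Λ hΩ hΛ
    rw [hdecomp Ω, hdecomp Λ]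
    rw [map_sum]
    refine sum_mem_AFmod F _ _ fun q' _ => ?_
    rw [map_smul]
    by_cases h0' : Λ q' = 0
    · rw [h0', zero_smul]; exact zero_mem_AFmod F
    refine smul_mem_AFmod F _ ?_
    rw [map_sum, LinearMap.sum_apply]
    refine sum_mem_AFmod F _ _ fun q _ => ?_
    rw [map_smul, LinearMap.smul_apply]
    by_cases h0 : Ω q = 0
    · rw [h0, zero_smul]; exact zero_mem_AFmod F
    refine smul_mem_AFmod F _ ?_
    obtain ⟨a, haq, haF⟩ := hΩ q h0
    obtain ⟨b, hbq, hbF⟩ := hΛ q' h0'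
    have ea : (gdelta (Quot.out q) : BurnsideMod ℤ S S) = gdelta a :=
      gdelta_congr (by rw [Quot.out_eq, haq])
    have eb : (gdelta (Quot.out q') : BurnsideMod ℤ S S) = gdelta b :=
      gdelta_congr (by rw [Quot.out_eq, hbq])
    rw [ea, eb]
    exact hcompF a b haF hbF
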